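/- The bilinear map μ₁((f,u),(g,v)) = ∫₀^{2π}∫₀^{2π} f·g_{xxx} dx dy is a 2-cocycle on the looped cotangent Virasoro algebra g̃: it is antisymmetric, μ₁((f,u),(g,v)) = −μ₁((g,v),(f,u)), and satisfies μ₁([a,b],c) + μ₁([b,c],a) + μ₁([c,a],b) = 0 for all a, b, c ∈ g̃. (This is the central extension of Virasoro type.) -/

import Mathlib

/-!
Write `∂` for `∂ₓ`. On smooth functions that are `2π`-periodic in `x`, `∂` is a derivation and
`∫∫ ∂P = 0`. In any commutative algebra with a derivation `∂` and an additive functional `ι`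
killing the image of `∂`, the form `ι (f · ∂³g)` is a 2-cocycle for the bracket `f ∂g - ∂f g`:
both `f ∂³g + g ∂³f` and the cyclic sum of `[f, g] ∂³h` are `∂` of explicit polynomials in
`f, g, h` and their derivatives.
-/

open Real intervalIntegral
open scoped ContDiff

noncomputable section

/-- Functions on `ℝ²` (representing functions on the 2-torus `S¹ × S¹`). -/
abbrev F2 : Type := ℝ × ℝ → ℂ

/-- `C∞₂π(ℝ²,ℂ)`: smooth functions `ℝ² → ℂ` which are `2π`-periodic in each variable. -/
def SmoothPer2 (f : F2) : Prop :=
  ContDiff ℝ ∞ f ∧ (∀ p : ℝ × ℝ, f (p.1 + 2 * π, p.2) = f p)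
    ∧ (∀ p : ℝ × ℝ, f (p.1, p.2 + 2 * π) = f p)

/-- Partial derivative in the first variable `x`. -/
def pdx (f : F2) : F2 := fun p => deriv (fun t => f (t, p.2)) p.1

/-- Partial derivative in the second variable `y`. -/
def pdy (f : F2) : F2 := fun p => deriv (fun t => f (p.1, t)) p.2

/-- Double integral `∫₀^{2π}∫₀^{2π} f dx dy` over the torus. -/
def integ2 (f : F2) : ℂ := ∫ y in (0:ℝ)..(2 * π), ∫ x in (0:ℝ)..(2 * π), f (x, y)

/-- Membership in the looped cotangent Virasoro algebra `g̃`: a pair `(f,u)` of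
functions in `C∞₂π(ℝ²,ℂ)`, `f` representing the loop of vector fields `f(x,y)·∂/∂x`
and `u` the loop of quadratic differentials `u(x,y)·dx²`. -/
def MemG (a : F2 × F2) : Prop := SmoothPer2 a.1 ∧ SmoothPer2 a.2

/-- The Lie bracket of the looped cotangent Virasoro algebra `g̃ = L(Vect(S¹) ⋉ F₂)`:
`[(f,u),(g,v)] = (f·g_x − f_x·g, f·v_x + 2·f_x·v − g·u_x − 2·g_x·u)`. -/
def gBracket (a b : F2 × F2) : F2 × F2 :=
  (fun p => a.1 p * pdx b.1 p - pdx a.1 p * b.1 p,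
   fun p => a.1 p * pdx b.2 p + 2 * pdx a.1 p * b.2 p
     - b.1 p * pdx a.2 p - 2 * pdx b.1 p * a.2 p)

/-- The Virasoro-type 2-cocycle `μ₁((f,u),(g,v)) = ∫₀^{2π}∫₀^{2π} f·g_{xxx} dx dy`
on the looped cotangent Virasoro algebra `g̃`. -/
def mu1 (a b : F2 × F2) : ℂ := integ2 (fun p => a.1 p * pdx (pdx (pdx b.1)) p)

section GelfandFuchs

variable {R A M : Type*} [CommRing R] [CommRing A] [Algebra R A] [AddCommGroup M]
  (ι : A →+ M) (D : Derivation R A A)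

def Derivation.wittBracket (f g : A) : A := f * D g - D f * g

def gelfandFuchsDensity (f g : A) : A := f * D (D (D g))

def gelfandFuchs (f g : A) : M := ι (gelfandFuchsDensity D f g)

theorem gelfandFuchsDensity_add_swap (f g : A) :
    gelfandFuchsDensity D f g + gelfandFuchsDensity D g f =
      D (f * D (D g) - D f * D g + D (D f) * g) := by
  simp only [gelfandFuchsDensity, map_add, map_sub, Derivation.leibniz, smul_eq_mul]
  ring

theorem gelfandFuchsDensity_wittBracket_cyclic (f g h : A) :
    gelfandFuchsDensity D (D.wittBracket f g) h + gelfandFuchsDensity D (D.wittBracket g h) f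
        + gelfandFuchsDensity D (D.wittBracket h f) g =
      D (f * D g * D (D h) - f * D (D g) * D h - D f * g * D (D h)
        + D f * D (D g) * h + D (D f) * g * D h - D (D f) * D g * h) := by
  simp only [gelfandFuchsDensity, Derivation.wittBracket, map_add, map_sub,
    Derivation.leibniz, smul_eq_mul]
  ring

variable {ι D}

theorem gelfandFuchs_antisymm (hι : ∀ a, ι (D a) = 0) (f g : A) :
    gelfandFuchs ι D f g = -gelfandFuchs ι D g f := by
  rw [gelfandFuchs, gelfandFuchs, eq_neg_iff_add_eq_zero, ← map_add,
    gelfandFuchsDensity_add_swap, hι]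

theorem gelfandFuchs_cocycle (hι : ∀ a, ι (D a) = 0) (f g h : A) :
    gelfandFuchs ι D (D.wittBracket f g) h + gelfandFuchs ι D (D.wittBracket g h) f
      + gelfandFuchs ι D (D.wittBracket h f) g = 0 := by
  simp only [gelfandFuchs, ← map_add, gelfandFuchsDensity_wittBracket_cyclic, hι]

end GelfandFuchs

theorem differentiableAt_slice {f : F2} (hf : Differentiable ℝ f) (p : ℝ × ℝ) :
    DifferentiableAt ℝ (fun t => f (t, p.2)) p.1 :=
  (hf _).comp _ (differentiableAt_id.prodMk (differentiableAt_const _))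

theorem pdx_add {f g : F2} (hf : Differentiable ℝ f) (hg : Differentiable ℝ g) :
    pdx (f + g) = pdx f + pdx g :=
  funext fun p => deriv_add (differentiableAt_slice hf p) (differentiableAt_slice hg p)

theorem pdx_mul {f g : F2} (hf : Differentiable ℝ f) (hg : Differentiable ℝ g) :
    pdx (f * g) = f * pdx g + g * pdx f := by
  funext p
  simp only [pdx, Pi.mul_apply, Pi.add_apply]
  rw [deriv_fun_mul (differentiableAt_slice hf p) (differentiableAt_slice hg p)]
  ring

theorem pdx_const_smul (c : ℂ) (f : F2) : pdx (c • f) = c • pdx f :=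
  funext fun _ => deriv_const_mul_field c

theorem pdx_eq_fderiv {f : F2} (hf : Differentiable ℝ f) :
    pdx f = fun p => fderiv ℝ f p (1, 0) := by
  funext p
  have hslice : HasDerivAt (fun t : ℝ => (t, p.2)) ((1 : ℝ), (0 : ℝ)) p.1 :=
    (hasDerivAt_id p.1).prodMk (hasDerivAt_const p.1 p.2)
  exact ((hf p).hasFDerivAt.comp_hasDerivAt p.1 hslice).deriv

theorem ContDiff.pdx {m n : WithTop ℕ∞} {f : F2} (hf : ContDiff ℝ n f) (hmn : m + 1 ≤ n) :
    ContDiff ℝ m (pdx f) := by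
  rw [pdx_eq_fderiv (hf.differentiable (by rintro rfl; simp at hmn))]
  exact (hf.fderiv_right hmn).clm_apply contDiff_const

theorem pdx_periodic {f : F2} (hper : ∀ p : ℝ × ℝ, f (p.1 + 2 * π, p.2) = f p)
    (p : ℝ × ℝ) : pdx f (p.1 + 2 * π, p.2) = pdx f p := by
  have hslice : (fun t => f (t + 2 * π, p.2)) = fun t => f (t, p.2) :=
    funext fun t => hper (t, p.2)
  rw [pdx, ← deriv_comp_add_const, hslice, pdx]

theorem integ2_add {f g : F2} (hf : Continuous f) (hg : Continuous g) :
    integ2 (f + g) = integ2 f + integ2 g := by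
  have hslice : ∀ {h : F2}, Continuous h → ∀ y : ℝ, Continuous fun x : ℝ => h (x, y) :=
    fun hh y => hh.comp (continuous_id.prodMk continuous_const)
  have hinner : ∀ {h : F2}, Continuous h →
      Continuous fun y : ℝ => ∫ x in (0:ℝ)..(2 * π), h (x, y) := fun {h} hh =>
    continuous_parametric_intervalIntegral_of_continuous'
      (f := fun y x => h (x, y)) (hh.comp continuous_swap) _ _
  unfold integ2
  simp only [Pi.add_apply]
  simp_rw [integral_add ((hslice hf _).intervalIntegrable _ _)
    ((hslice hg _).intervalIntegrable _ _)]
  exact integral_add ((hinner hf).intervalIntegrable _ _) ((hinner hg).intervalIntegrable _ _)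

theorem integ2_pdx_eq_zero {f : F2} (hf : ContDiff ℝ 1 f)
    (hper : ∀ p : ℝ × ℝ, f (p.1 + 2 * π, p.2) = f p) : integ2 (pdx f) = 0 := by
  have hinner (y : ℝ) : ∫ x in (0:ℝ)..(2 * π), pdx f (x, y) = 0 := by
    have hslice : ContDiff ℝ 1 fun t : ℝ => f (t, y) :=
      hf.comp (contDiff_id.prodMk contDiff_const)
    change ∫ x in (0:ℝ)..(2 * π), deriv (fun t => f (t, y)) x = 0
    rw [integral_deriv_eq_sub' _ rfl
      (fun x _ => (hslice.differentiable one_ne_zero).differentiableAt)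
      (hslice.continuous_deriv le_rfl).continuousOn]
    simpa using sub_eq_zero.2 (hper (0, y))
  simp [integ2, hinner]

def smoothXPeriodic : Subalgebra ℂ F2 where
  carrier := {f | ContDiff ℝ ∞ f ∧ ∀ p : ℝ × ℝ, f (p.1 + 2 * π, p.2) = f p}
  mul_mem' hf hg := ⟨hf.1.mul hg.1, fun p => by simp only [Pi.mul_apply, hf.2 p, hg.2 p]⟩
  add_mem' hf hg := ⟨hf.1.add hg.1, fun p => by simp only [Pi.add_apply, hf.2 p, hg.2 p]⟩
  algebraMap_mem' _ := ⟨contDiff_const, fun _ => rfl⟩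

theorem SmoothPer2.mem_smoothXPeriodic {f : F2} (hf : SmoothPer2 f) : f ∈ smoothXPeriodic :=
  ⟨hf.1, hf.2.1⟩

theorem differentiable_of_mem_smoothXPeriodic {f : F2} (hf : f ∈ smoothXPeriodic) :
    Differentiable ℝ f :=
  hf.1.differentiable (by simp)

theorem pdx_mem_smoothXPeriodic {f : F2} (hf : f ∈ smoothXPeriodic) :
    pdx f ∈ smoothXPeriodic :=
  ⟨hf.1.pdx le_rfl, pdx_periodic hf.2⟩

def pdxDerivation : Derivation ℂ smoothXPeriodic smoothXPeriodic :=
  Derivation.mk'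
    { toFun f := ⟨pdx f, pdx_mem_smoothXPeriodic f.2⟩
      map_add' f g := Subtype.ext <| pdx_add (differentiable_of_mem_smoothXPeriodic f.2)
        (differentiable_of_mem_smoothXPeriodic g.2)
      map_smul' c f := Subtype.ext <| pdx_const_smul c f }
    fun f g => Subtype.ext <| pdx_mul (differentiable_of_mem_smoothXPeriodic f.2)
      (differentiable_of_mem_smoothXPeriodic g.2)

def integ2AddHom : smoothXPeriodic →+ ℂ where
  toFun f := integ2 f
  map_zero' := by simp [integ2]
  map_add' f g := integ2_add f.2.1.continuous g.2.1.continuous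

theorem integ2AddHom_pdxDerivation (f : smoothXPeriodic) : integ2AddHom (pdxDerivation f) = 0 :=
  integ2_pdx_eq_zero (f.2.1.of_le (by simp)) f.2.2

/-- **`μ₁` is a 2-cocycle on `g̃` (central extension of Virasoro type)**:
`μ₁((f,u),(g,v)) = ∫∫ f·g_{xxx} dx dy` is antisymmetric and satisfies the cocycle
identity `μ₁([a,b],c) + μ₁([b,c],a) + μ₁([c,a],b) = 0` on `g̃`. -/
theorem mu1_is_two_cocycle :
    (∀ a b : F2 × F2, MemG a → MemG b → mu1 a b = - mu1 b a) ∧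
    (∀ a b d : F2 × F2, MemG a → MemG b → MemG d →
      mu1 (gBracket a b) d + mu1 (gBracket b d) a + mu1 (gBracket d a) b = 0) := by
  -- `mu1` and the first component of `gBracket` unfold to `gelfandFuchs` and `wittBracket`
  -- for `integ2AddHom` and `pdxDerivation`.
  constructor
  · intro a b ha hb
    exact gelfandFuchs_antisymm integ2AddHom_pdxDerivation
      ⟨a.1, ha.1.mem_smoothXPeriodic⟩ ⟨b.1, hb.1.mem_smoothXPeriodic⟩
  · intro a b d ha hb hd
    exact gelfandFuchs_cocycle integ2AddHom_pdxDerivation ⟨a.1, ha.1.mem_smoothXPeriodic⟩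
      ⟨b.1, hb.1.mem_smoothXPeriodic⟩ ⟨d.1, hd.1.mem_smoothXPeriodic⟩
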